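/- arXiv:1907.04208 — 5 statements merged into one kernel-verified Lean document; each statement's English description precedes it below -/
import Mathlib

section
/- For every y in (Z/4Z)^2, the character sum χ_y(L L^{(-1)}) := Σ_{a,b ∈ L} i^{y·(a-b)} equals 16 if y = (0,0), equals 0 if y ∈ {(0,2),(2,0),(2,2)}, and equals 4 otherwise. -/
open Finset

abbrev G4 : Type := ZMod 4 × ZMod 4

/-- The character `χ_y(x) = i^(y·x)` on `(ℤ/4ℤ)²`. -/
noncomputable def chi (y x : G4) : ℂ := Complex.I ^ (y.1 * x.1 + y.2 * x.2).val

def L : Finset G4 := {(0,0),(0,1),(1,0),(3,3)}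

def Zset : Finset G4 := {(0,2),(2,0),(2,2)}

lemma Ival (x : ZMod 4) : Complex.I ^ x.val =
    if x = 0 then 1 else if x = 1 then Complex.I else if x = 2 then -1 else -Complex.I := by
  have h : x = 0 ∨ x = 1 ∨ x = 2 ∨ x = 3 := by revert x; decide
  rcases h with rfl | rfl | rfl | rfl
  · rw [if_pos rfl, show ZMod.val (0 : ZMod 4) = 0 from rfl]; norm_num
  · rw [if_neg (by decide), if_pos rfl, show ZMod.val (1 : ZMod 4) = 1 from rfl]; norm_num
  · rw [if_neg (by decide), if_neg (by decide), if_pos rfl, show ZMod.val (2 : ZMod 4) = 2 from rfl]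
    norm_num [pow_succ]
  · rw [if_neg (by decide), if_neg (by decide), if_neg (by decide),
        show ZMod.val (3 : ZMod 4) = 3 from rfl]
    norm_num [pow_succ]

lemma sumL (f : G4 → ℂ) : ∑ a ∈ L, f a = f (0,0) + f (0,1) + f (1,0) + f (3,3) := by
  rw [show L = {(0,0),(0,1),(1,0),(3,3)} from rfl,
      Finset.sum_insert (by decide), Finset.sum_insert (by decide),
      Finset.sum_insert (by decide), Finset.sum_singleton]
  ring

theorem stmt0 (y : G4) :
    ∑ a ∈ L, ∑ b ∈ L, chi y (a - b) =
      if y = (0,0) then 16 else if y ∈ Zset then 0 else 4 := by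
  rw [sumL]
  rw [sumL, sumL, sumL, sumL]
  obtain ⟨y1, y2⟩ := y
  have h1 : y1 = 0 ∨ y1 = 1 ∨ y1 = 2 ∨ y1 = 3 := by revert y1; decide
  have h2 : y2 = 0 ∨ y2 = 1 ∨ y2 = 2 ∨ y2 = 3 := by revert y2; decide
  rcases h1 with rfl | rfl | rfl | rfl <;> rcases h2 with rfl | rfl | rfl | rfl <;>
    simp only [chi, Ival, Zset] <;>
    simp (config := { decide := true }) <;> ring
end

section
/- L and L form a formally dual pair in (Z/4Z)^2: for every y ∈ (Z/4Z)^2, |Σ_{x ∈ L} i^{y·x}|^2 = 4 · ν_L(y), where ν_L(y) = |{(a,b) ∈ L × L : y = a - b}|. -/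
open Finset

/-- `ν_A(y)`, the number of pairs `(a,b) ∈ A × A` with `a - b = y`. -/
def nu {G : Type*} [AddCommGroup G] [DecidableEq G] (A : Finset G) (y : G) : ℕ :=
  ((A ×ˢ A).filter fun p => p.1 - p.2 = y).card

lemma hval (z : ZMod 4) : Complex.I ^ z.val =
    if z = 0 then 1 else if z = 1 then Complex.I else if z = 2 then -1 else -Complex.I := by
  have h : z = 0 ∨ z = 1 ∨ z = 2 ∨ z = 3 := by revert z; decide
  rcases h with h | h | h | h <;> subst h <;>
    simp (config := { decide := true }) only
      [show (ZMod.val (0 : ZMod 4)) = 0 from rfl, show (ZMod.val (1 : ZMod 4)) = 1 from rfl,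
       show (ZMod.val (2 : ZMod 4)) = 2 from rfl, show (ZMod.val (3 : ZMod 4)) = 3 from rfl,
       if_true, if_false, reduceIte] <;>
    norm_num [pow_succ, Complex.I_mul_I]

lemma hnu : ∀ y : G4, nu L y = if y = 0 then 4
    else if y = (0,2) ∨ y = (2,0) ∨ y = (2,2) then 0 else 1 := by decide

set_option maxHeartbeats 2000000 in
/-- `L` and `L` form a formally dual pair in `(ℤ/4ℤ)²`. -/
theorem stmt3 (y : G4) :
    Complex.normSq (∑ x ∈ L, chi y x) = 4 * nu L y := by
  have hsum : ∀ y : G4, ∑ x ∈ L, chi y x =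
      chi y (0,0) + chi y (0,1) + chi y (1,0) + chi y (3,3) := by
    intro y
    rw [show L = {(0,0),(0,1),(1,0),(3,3)} from rfl,
      Finset.sum_insert (by decide), Finset.sum_insert (by decide),
      Finset.sum_insert (by decide), Finset.sum_singleton]
    ring
  obtain ⟨a, b⟩ := y
  rw [hsum, hnu]
  fin_cases a <;> fin_cases b <;>
    simp (config := { decide := true }) only [chi, hval] <;>
    norm_num [Complex.normSq_apply]
end

section
/- If S₁,T₁ form a formally dual pair in a finite abelian group G₁ and S₂,T₂ form a formally dual pair in a finite abelian group G₂, then S₁ × S₂ and T₁ × T₂ form a formally dual pair in G₁ × G₂. -/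
open Finset

lemma nu_prod {G1 G2 : Type*} [AddCommGroup G1] [DecidableEq G1]
    [AddCommGroup G2] [DecidableEq G2] (T1 : Finset G1) (T2 : Finset G2)
    (y : G1 × G2) : nu (T1 ×ˢ T2) y = nu T1 y.1 * nu T2 y.2 := by
  rw [nu, nu, nu, ← Finset.card_product]
  apply Finset.card_bij (fun p _ => ((p.1.1, p.2.1), (p.1.2, p.2.2)))
  · rintro ⟨⟨a1, a2⟩, ⟨b1, b2⟩⟩ hp
    simp only [Finset.mem_filter, Finset.mem_product, Prod.ext_iff, Prod.mk_sub_mk] at hp ⊢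
    tauto
  · rintro ⟨⟨a1, a2⟩, ⟨b1, b2⟩⟩ hp ⟨⟨c1, c2⟩, ⟨d1, d2⟩⟩ hq h
    simp_all [Prod.ext_iff]
  · rintro ⟨⟨a1, b1⟩, ⟨a2, b2⟩⟩ hp
    refine ⟨((a1, a2), (b1, b2)), ?_, rfl⟩
    simp only [Finset.mem_filter, Finset.mem_product, Prod.ext_iff, Prod.mk_sub_mk] at hp ⊢
    tauto

/-- Product construction: if `S₁, T₁` is a formally dual pair in `G₁` and `S₂, T₂`
is a formally dual pair in `G₂`, then `S₁ × S₂` and `T₁ × T₂` form a formally dual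
pair in `G₁ × G₂` (with respect to the product characters). -/
theorem stmt5 {G1 G2 : Type*}
    [AddCommGroup G1] [Fintype G1] [DecidableEq G1]
    [AddCommGroup G2] [Fintype G2] [DecidableEq G2]
    (χ1 : G1 ≃ AddChar G1 ℂ) (hχ1 : ∀ a b : G1, χ1 (a + b) = χ1 a * χ1 b)
    (χ2 : G2 ≃ AddChar G2 ℂ) (hχ2 : ∀ a b : G2, χ2 (a + b) = χ2 a * χ2 b)
    (S1 T1 : Finset G1) (S2 T2 : Finset G2)
    (h1 : ∀ y : G1, Complex.normSq (∑ x ∈ S1, χ1 y x)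
      = (S1.card : ℝ) ^ 2 / (T1.card : ℝ) * (nu T1 y : ℝ))
    (h2 : ∀ y : G2, Complex.normSq (∑ x ∈ S2, χ2 y x)
      = (S2.card : ℝ) ^ 2 / (T2.card : ℝ) * (nu T2 y : ℝ)) :
    ∀ y : G1 × G2,
      Complex.normSq (∑ x ∈ S1 ×ˢ S2, χ1 y.1 x.1 * χ2 y.2 x.2)
        = (((S1 ×ˢ S2).card : ℝ)) ^ 2 / (((T1 ×ˢ T2).card : ℝ))
            * (nu (T1 ×ˢ T2) y : ℝ) := by
  intro y
  have hsum : (∑ x ∈ S1 ×ˢ S2, χ1 y.1 x.1 * χ2 y.2 x.2)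
      = (∑ x ∈ S1, χ1 y.1 x) * (∑ x ∈ S2, χ2 y.2 x) := by
    rw [Finset.sum_mul_sum, Finset.sum_product]
  rw [hsum, Complex.normSq_mul, h1, h2, nu_prod, Finset.card_product, Finset.card_product]
  push_cast
  ring
end

section
/- If S and T form a formally dual pair in a finite abelian group G, then |G| = |S| · |T|. -/
open Finset

lemma nu_sum_eq {G : Type*} [AddCommGroup G] [Fintype G] [DecidableEq G] (T : Finset G) :
    ∑ y : G, nu T y = T.card ^ 2 := by
  have := Finset.card_eq_sum_card_fiberwise
    (f := fun p : G × G => p.1 - p.2) (s := T ×ˢ T) (t := Finset.univ)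
    (fun x _ => Finset.mem_univ _)
  simp only [nu]
  rw [← this, Finset.card_product, sq]

lemma sum_char_eq {G : Type*} [AddCommGroup G] [Fintype G] [DecidableEq G]
    (χ : G ≃ AddChar G ℂ) (hχ : ∀ a b : G, χ (a + b) = χ a * χ b) (x : G) :
    ∑ y : G, χ y x = if x = 0 then (Fintype.card G : ℂ) else 0 := by
  have hzero : ∀ z : G, χ 0 z = 1 := by
    intro z
    have h00 : χ (0 + 0) = χ 0 * χ 0 := hχ 0 0
    rw [add_zero] at h00
    have := congrArg (fun ψ : AddChar G ℂ => ψ z) h00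
    simp only [AddChar.mul_apply] at this
    have hne : (χ 0) z ≠ 0 := by
      have : ‖(χ 0) z‖ = 1 := AddChar.norm_apply _ _
      intro hc; rw [hc] at this; simp at this
    have h2 : (χ 0) z * (χ 0) z = (χ 0) z * 1 := by rw [mul_one]; exact this.symm
    exact mul_left_cancel₀ hne h2
  let ψ : AddChar G ℂ :=
    { toFun := fun y => χ y x
      map_zero_eq_one' := hzero x
      map_add_eq_mul' := fun a b => by
        have := congrArg (fun φ : AddChar G ℂ => φ x) (hχ a b)
        simpa using this }
  have hψ : ∀ y : G, ψ y = χ y x := fun _ => rfl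
  by_cases hx : x = 0
  · subst hx
    simp [AddChar.map_zero_eq_one, Finset.card_univ]
  · rw [if_neg hx]
    have hψne : ψ ≠ 0 := by
      obtain ⟨φ, hφ⟩ := AddChar.exists_apply_ne_zero.2 hx
      intro hc
      apply hφ
      have : ψ (χ.symm φ) = 1 := by rw [hc]; rfl
      rwa [hψ, χ.apply_symm_apply] at this
    calc ∑ y : G, χ y x = ∑ y : G, ψ y := by simp [hψ]
      _ = 0 := AddChar.sum_eq_zero_iff_ne_zero.2 hψne

/-- If nonempty subsets `S` and `T` form a formally dual pair in a finite abelian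
group `G`, then `|G| = |S| ⬝ |T|`. -/
theorem stmt7 {G : Type*} [AddCommGroup G] [Fintype G] [DecidableEq G]
    (χ : G ≃ AddChar G ℂ) (hχ : ∀ a b : G, χ (a + b) = χ a * χ b)
    (S T : Finset G) (hS : S.Nonempty) (hT : T.Nonempty)
    (h : ∀ y : G, Complex.normSq (∑ x ∈ S, χ y x)
      = (S.card : ℝ) ^ 2 / (T.card : ℝ) * (nu T y : ℝ)) :
    Fintype.card G = S.card * T.card := by
  have hTcard : (T.card : ℝ) ≠ 0 := by
    exact_mod_cast Finset.card_ne_zero_of_mem hT.choose_spec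
  have hScard : (S.card : ℝ) ≠ 0 := by
    exact_mod_cast Finset.card_ne_zero_of_mem hS.choose_spec
  -- Sum both sides of h over y
  have hR : ∑ y : G, Complex.normSq (∑ x ∈ S, χ y x)
      = (S.card : ℝ) ^ 2 * (T.card : ℝ) := by
    calc ∑ y : G, Complex.normSq (∑ x ∈ S, χ y x)
        = ∑ y : G, (S.card : ℝ) ^ 2 / (T.card : ℝ) * (nu T y : ℝ) := by
          exact Finset.sum_congr rfl fun y _ => h y
      _ = (S.card : ℝ) ^ 2 / (T.card : ℝ) * ∑ y : G, (nu T y : ℝ) := by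
          rw [Finset.mul_sum]
      _ = (S.card : ℝ) ^ 2 / (T.card : ℝ) * ((T.card : ℝ) ^ 2) := by
          rw [← Nat.cast_sum, nu_sum_eq]; push_cast; ring_nf
      _ = (S.card : ℝ) ^ 2 * (T.card : ℝ) := by field_simp
  -- Compute the LHS via orthogonality
  have hL : ((∑ y : G, Complex.normSq (∑ x ∈ S, χ y x) : ℝ) : ℂ)
      = (Fintype.card G : ℂ) * (S.card : ℂ) := by
    push_cast
    calc ∑ y : G, (Complex.normSq (∑ x ∈ S, χ y x) : ℂ)
        = ∑ y : G, (∑ a ∈ S, χ y a) * ∑ b ∈ S, (starRingEnd ℂ) (χ y b) := by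
          refine Finset.sum_congr rfl fun y _ => ?_
          rw [← Complex.mul_conj, map_sum]
      _ = ∑ y : G, ∑ a ∈ S, ∑ b ∈ S, χ y (a - b) := by
          refine Finset.sum_congr rfl fun y _ => ?_
          rw [Finset.sum_mul_sum]
          refine Finset.sum_congr rfl fun a _ => Finset.sum_congr rfl fun b _ => ?_
          rw [← AddChar.map_neg_eq_conj, ← AddChar.map_add_eq_mul, ← sub_eq_add_neg]
      _ = ∑ a ∈ S, ∑ b ∈ S, ∑ y : G, χ y (a - b) := by
          rw [Finset.sum_comm]
          exact Finset.sum_congr rfl fun a _ => Finset.sum_comm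
      _ = ∑ a ∈ S, ∑ b ∈ S, if a - b = 0 then (Fintype.card G : ℂ) else 0 := by
          exact Finset.sum_congr rfl fun a _ => Finset.sum_congr rfl fun b _ =>
            sum_char_eq χ hχ (a - b)
      _ = ∑ a ∈ S, ∑ b ∈ S, if b = a then (Fintype.card G : ℂ) else 0 := by
          refine Finset.sum_congr rfl fun a _ => Finset.sum_congr rfl fun b _ => ?_
          congr 1
          simp [sub_eq_zero, eq_comm]
      _ = ∑ a ∈ S, (Fintype.card G : ℂ) := by
          refine Finset.sum_congr rfl fun a ha => ?_
          rw [Finset.sum_ite_eq' S a fun _ => (Fintype.card G : ℂ)]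
          simp [ha]
      _ = (Fintype.card G : ℂ) * (S.card : ℂ) := by
          rw [Finset.sum_const, nsmul_eq_mul, mul_comm]
  have hL' : (∑ y : G, Complex.normSq (∑ x ∈ S, χ y x) : ℝ)
      = (Fintype.card G : ℝ) * (S.card : ℝ) := by
    have := hL
    rw [show ((Fintype.card G : ℂ) * (S.card : ℂ))
        = (((Fintype.card G : ℝ) * (S.card : ℝ) : ℝ) : ℂ) by push_cast; ring] at this
    exact_mod_cast this
  have key : (Fintype.card G : ℝ) * (S.card : ℝ)
      = ((S.card : ℝ) * (T.card : ℝ)) * (S.card : ℝ) := by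
    rw [← hL', hR]; ring
  have : (Fintype.card G : ℝ) = (S.card : ℝ) * (T.card : ℝ) :=
    mul_right_cancel₀ hScard key
  exact_mod_cast this
end

section
/- For T = L^m ⊆ (Z/4Z)^{2m} and any z ∈ (Z/4Z)^{2m}, write z = (z₁,…,z_m) with z_i ∈ (Z/4Z)^2. Then |χ_z(T) + χ_z(T^{(-1)})|^2 = 0 if some z_i ∈ {(0,2),(2,0),(2,2)}; otherwise, letting w = |{i : z_i ∈ N₁₁}|, u = |{i : z_i ∈ N₁₁ ∪ N₁₂}| and v = |{i : z_i ∈ N₁₁ ∪ N₂₁}|, it equals 0 if u + v is odd and equals 4^{2m − u − v + w + 1} if u + v is even. -/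
open Finset

/-- The character `χ_z` on `((ℤ/4ℤ)²)^m`. -/
noncomputable def chiV {m : ℕ} (z x : Fin m → G4) : ℂ := ∏ i, chi (z i) (x i)

def N11 : Finset G4 := {(0,1),(0,3),(1,0),(3,0),(1,3),(3,1)}

def N12 : Finset G4 := {(1,1),(1,2),(2,1)}

def N21 : Finset G4 := {(3,3),(3,2),(2,3)}

/-- `T = L^m ⊆ ((ℤ/4ℤ)²)^m`. -/
def Tm (m : ℕ) : Finset (Fin m → G4) := Fintype.piFinset fun _ => L

/-- The number of coordinates of `z` lying in `A`. -/
def cnt {m : ℕ} (A : Finset G4) (z : Fin m → G4) : ℕ :=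
  (univ.filter fun i => z i ∈ A).card

/-! ### Auxiliary machinery -/

noncomputable def cval (a : ZMod 4) : ℂ :=
  if a = 0 then 1 else if a = 1 then Complex.I else if a = 2 then -1 else -Complex.I

noncomputable def F (y : G4) : ℂ :=
  if y ∈ Zset then 0 else if y = 0 then 4 else
  if y ∈ N12 then 2 * Complex.I else if y ∈ N21 then -(2 * Complex.I) else 2

lemma Ipow (a : ZMod 4) : Complex.I ^ a.val = cval a := by
  have h : a = 0 ∨ a = 1 ∨ a = 2 ∨ a = 3 := by revert a; decide
  rcases h with rfl|rfl|rfl|rfl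
  · rw [show (0:ZMod 4).val = 0 from rfl]; simp [cval]
  · rw [show (1:ZMod 4).val = 1 from rfl]
    simp [cval, (by decide : (1:ZMod 4) ≠ 0)]
  · rw [show (2:ZMod 4).val = 2 from rfl]
    simp [cval, (by decide : (2:ZMod 4) ≠ 0), (by decide : (2:ZMod 4) ≠ 1), Complex.I_sq]
  · rw [show (3:ZMod 4).val = 3 from rfl]
    simp [cval, (by decide : (3:ZMod 4) ≠ 0), (by decide : (3:ZMod 4) ≠ 1),
      (by decide : (3:ZMod 4) ≠ 2), pow_succ, Complex.I_sq]

lemma cval_neg (a : ZMod 4) : cval (-a) = (starRingEnd ℂ) (cval a) := by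
  have h : a = 0 ∨ a = 1 ∨ a = 2 ∨ a = 3 := by revert a; decide
  rcases h with rfl|rfl|rfl|rfl <;>
    simp [cval, Complex.conj_I, (by decide : (-1 : ZMod 4) = 3), (by decide : (-2 : ZMod 4) = 2),
      (by decide : (-3 : ZMod 4) = 1), (by decide : (1:ZMod 4) ≠ 0), (by decide : (2:ZMod 4) ≠ 0),
      (by decide : (2:ZMod 4) ≠ 1), (by decide : (3:ZMod 4) ≠ 0), (by decide : (3:ZMod 4) ≠ 1),
      (by decide : (3:ZMod 4) ≠ 2)]

lemma chi_eq (y x : G4) : chi y x = cval (y.1 * x.1 + y.2 * x.2) := Ipow _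

lemma chi_neg (y x : G4) : chi y (-x) = (starRingEnd ℂ) (chi y x) := by
  rw [chi_eq, chi_eq, ← cval_neg]
  congr 1
  simp only [Prod.fst_neg, Prod.snd_neg]
  ring

lemma Ssum (y : G4) : ∑ x ∈ L, chi y x = F y := by
  obtain ⟨a, b⟩ := y
  have ha : a = 0 ∨ a = 1 ∨ a = 2 ∨ a = 3 := by revert a; decide
  have hb : b = 0 ∨ b = 1 ∨ b = 2 ∨ b = 3 := by revert b; decide
  rw [L, Finset.sum_insert (by decide), Finset.sum_insert (by decide),
    Finset.sum_insert (by decide), Finset.sum_singleton]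
  simp only [chi_eq]
  rcases ha with rfl|rfl|rfl|rfl <;> rcases hb with rfl|rfl|rfl|rfl <;>
    simp (config := { decide := true }) only [cval, F, Zset, N12, N21, if_true, if_false] <;>
    norm_num [Complex.ext_iff]

lemma sumTm (m : ℕ) (z : Fin m → G4) : ∑ x ∈ Tm m, chiV z x = ∏ i, F (z i) := by
  simp only [← Ssum]
  exact (Finset.prod_univ_sum _ _).symm

lemma sumTm_neg (m : ℕ) (z : Fin m → G4) :
    ∑ x ∈ Tm m, chiV z (-x) = (starRingEnd ℂ) (∑ x ∈ Tm m, chiV z x) := by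
  rw [map_sum]
  apply Finset.sum_congr rfl
  intro x _
  simp only [chiV, Pi.neg_apply, map_prod, chi_neg]

lemma I_pow_mod (K : ℕ) : Complex.I ^ K = Complex.I ^ (K % 4) := by
  conv_lhs => rw [← Nat.mod_add_div K 4]
  rw [pow_add, pow_mul, Complex.I_pow_four, one_pow, mul_one]

theorem stmt13 (m : ℕ) (z : Fin m → G4) :
    ((∃ i, z i ∈ Zset) →
      Complex.normSq ((∑ x ∈ Tm m, chiV z x) + ∑ x ∈ Tm m, chiV z (-x)) = 0) ∧
    ((∀ i, z i ∉ Zset) →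
      Complex.normSq ((∑ x ∈ Tm m, chiV z x) + ∑ x ∈ Tm m, chiV z (-x)) =
        2 * 4 ^ (2 * m + cnt N11 z - (cnt N11 z + cnt N12 z) - (cnt N11 z + cnt N21 z))
          * (1 + (-1 : ℝ) ^ ((cnt N11 z + cnt N12 z) + (cnt N11 z + cnt N21 z)))) := by
  rw [sumTm_neg, sumTm]
  constructor
  · rintro ⟨i, hi⟩
    have hF : F (z i) = 0 := by rw [F, if_pos hi]
    have hA : ∏ i, F (z i) = 0 := Finset.prod_eq_zero (Finset.mem_univ i) hF
    rw [hA]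
    simp
  · intro h
    set w := cnt N11 z with hw
    set p := cnt N12 z with hp
    set q := cnt N21 z with hq
    -- pointwise form of F
    set e : Fin m → ℕ := fun i => if z i = 0 then 2 else 1 with he
    set k : Fin m → ℕ := fun i => if z i ∈ N12 then 1 else if z i ∈ N21 then 3 else 0 with hk
    have hFe : ∀ i, F (z i) = 2 ^ (e i) * Complex.I ^ (k i) := by
      intro i
      have hz := h i
      rw [F, if_neg hz]
      simp only [he, hk]
      by_cases h0 : z i = 0
      · have h12 : z i ∉ N12 := by rw [h0]; decide
        have h21 : z i ∉ N21 := by rw [h0]; decide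
        rw [if_pos h0, if_pos h0, if_neg h12, if_neg h21]
        norm_num
      · rw [if_neg h0, if_neg h0]
        by_cases h12 : z i ∈ N12
        · have h21 : z i ∉ N21 := by
            have : ∀ y : G4, y ∈ N12 → y ∉ N21 := by decide
            exact this _ h12
          rw [if_pos h12, if_pos h12]
          norm_num
        · rw [if_neg h12, if_neg h12]
          by_cases h21 : z i ∈ N21
          · rw [if_pos h21, if_pos h21]
            norm_num [pow_succ, Complex.I_sq]
          · rw [if_neg h21, if_neg h21]
            norm_num
    have hA : ∏ i, F (z i) = (2:ℂ) ^ (∑ i, e i) * Complex.I ^ (∑ i, k i) := by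
      rw [← Finset.prod_pow_eq_pow_sum, ← Finset.prod_pow_eq_pow_sum, ← Finset.prod_mul_distrib]
      exact Finset.prod_congr rfl fun i _ => hFe i
    set E := ∑ i, e i with hE
    set K := ∑ i, k i with hK
    -- counting
    have hc0 : E = m + (univ.filter fun i => z i = 0).card := by
      rw [hE]
      have : ∀ i : Fin m, e i = 1 + (if z i = 0 then 1 else 0) := by
        intro i; simp only [he]; split <;> rfl
      rw [Finset.sum_congr rfl fun i _ => this i, Finset.sum_add_distrib, Finset.sum_boole]
      simp [Nat.cast_id]
    have hKval : K = p + 3 * q := by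
      rw [hK, hp, hq]
      have : ∀ i : Fin m, k i =
          (if z i ∈ N12 then 1 else 0) + 3 * (if z i ∈ N21 then 1 else 0) := by
        intro i
        have hd : ∀ y : G4, y ∈ N12 → y ∉ N21 := by decide
        simp only [hk]
        by_cases h12 : z i ∈ N12
        · rw [if_pos h12, if_pos h12, if_neg (hd _ h12)]
        · rw [if_neg h12, if_neg h12]
          by_cases h21 : z i ∈ N21
          · rw [if_pos h21, if_pos h21]
          · rw [if_neg h21, if_neg h21]
      rw [Finset.sum_congr rfl fun i _ => this i, Finset.sum_add_distrib, Finset.sum_boole,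
        ← Finset.mul_sum, Finset.sum_boole]
      simp [cnt, Nat.cast_id]
    have hpart : (univ.filter fun i => z i = 0).card + w + p + q = m := by
      have key : ∀ y : G4, y ∉ Zset →
          (if y = 0 then 1 else 0) + (if y ∈ N11 then 1 else 0)
            + (if y ∈ N12 then 1 else 0) + (if y ∈ N21 then 1 else 0) = 1 := by decide
      have : (m : ℕ) = ∑ i : Fin m, ((if z i = 0 then 1 else 0) + (if z i ∈ N11 then 1 else 0)
          + (if z i ∈ N12 then 1 else 0) + (if z i ∈ N21 then 1 else 0)) := by
        rw [Finset.sum_congr rfl fun i _ => key (z i) (h i)]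
        simp
      rw [hw, hp, hq]
      simp only [Finset.sum_add_distrib, Finset.sum_boole, Nat.cast_id] at this
      simp only [cnt]
      omega
    -- parity of exponents
    have hEN : E = 2 * m + w - (w + p) - (w + q) := by omega
    have hnormSq2 : Complex.normSq ((2:ℂ) ^ E) = 4 ^ E := by
      rw [map_pow]
      norm_num [Complex.normSq]
    have hconj2 : (starRingEnd ℂ) ((2:ℂ) ^ E) = (2:ℂ) ^ E := by
      rw [map_pow, (by norm_num : ((2:ℂ)) = ((2:ℝ):ℂ)), Complex.conj_ofReal]
    rw [hA, map_mul, hconj2, ← mul_add]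
    rw [map_mul, hnormSq2]
    rcases Nat.even_or_odd K with hKe | hKo
    · -- K even : result is 4^E * 4
      have hupar : (-1 : ℝ) ^ ((w + p) + (w + q)) = 1 := by
        apply Even.neg_one_pow
        rcases hKe with ⟨t, ht⟩
        exact ⟨w + t - q, by omega⟩
      have hIK : Complex.normSq (Complex.I ^ K + (starRingEnd ℂ) (Complex.I ^ K)) = 4 := by
        rw [I_pow_mod]
        have h4 : K % 4 = 0 ∨ K % 4 = 2 := by
          rcases hKe with ⟨t, ht⟩; omega
        rcases h4 with h4 | h4 <;> rw [h4] <;>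
          norm_num [pow_succ, Complex.I_sq, Complex.normSq]
      rw [hIK, hupar, hEN]
      norm_num
      ring
    · -- K odd : result is 0
      have hupar : (-1 : ℝ) ^ ((w + p) + (w + q)) = -1 := by
        apply Odd.neg_one_pow
        rcases hKo with ⟨t, ht⟩
        exact ⟨w + t - q, by omega⟩
      have hIK : Complex.I ^ K + (starRingEnd ℂ) (Complex.I ^ K) = 0 := by
        rw [I_pow_mod]
        have h4 : K % 4 = 1 ∨ K % 4 = 3 := by
          rcases hKo with ⟨t, ht⟩; omega
        rcases h4 with h4 | h4 <;> rw [h4] <;>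
          simp [pow_succ, Complex.I_sq, Complex.conj_I]
      rw [hIK, hupar]
      simp
end
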